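/- arXiv:2206.09945 — 4 statements merged into one kernel-verified Lean document; each statement's English description precedes it below -/
import Mathlib

section
/- For every K ∈ ℝ^{(n−p)×p}, the matrix λI_p − W is invertible over F and (λI_p − W)·G = V; equivalently, G = (λI_p − W)^{-1}·V, so the SRTR pair (W, V) produced by the state-space formula is a left factorization of G with left factor λI_p − W. -/
open Matrix Polynomial

set_option synthInstance.maxHeartbeats 1000000
set_option maxHeartbeats 1000000

noncomputable section

/-- The field of real rational functions. -/
abbrev FF : Type := RatFunc ℝ

/-- The rational function `λ` (the image of the polynomial indeterminate `X`). -/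
noncomputable def lam : FF := RatFunc.X

/-- Entrywise embedding of a real matrix into matrices over `FF`. -/
noncomputable def mapF {k l : Type} (M : Matrix k l ℝ) : Matrix k l FF :=
  M.map (algebraMap ℝ FF)

/-- The pencil `λ I - M` over `FF`, for a real square matrix `M`. -/
noncomputable def lamI {k : Type} [Fintype k] [DecidableEq k] (M : Matrix k k ℝ) :
    Matrix k k FF := lam • (1 : Matrix k k FF) - mapF M

/-- Entrywise complexification of a real matrix. -/
def mapC {k l : Type} (M : Matrix k l ℝ) : Matrix k l ℂ :=
  M.map (algebraMap ℝ ℂ)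

/-- A real rational function is stable if every complex root of its reduced denominator
has real part `< 0`. -/
def StableF (f : RatFunc ℝ) : Prop :=
  ∀ z : ℂ, ((f.denom).map (algebraMap ℝ ℂ)).IsRoot z → z.re < 0

/-- A real square matrix is Hurwitz if all roots of its characteristic polynomial
have real part `< 0`. -/
def IsHurwitz {k : Type} [Fintype k] [DecidableEq k] (M : Matrix k k ℝ) : Prop :=
  ∀ z : ℂ, ((M.charpoly).map (algebraMap ℝ ℂ)).IsRoot z → z.re < 0

/-- `A_K := K A11 - K A12 K + A21 - A22 K`. -/
noncomputable def AKmat {p r : ℕ} (A11 : Matrix (Fin p) (Fin p) ℝ)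
    (A12 : Matrix (Fin p) (Fin r) ℝ) (A21 : Matrix (Fin r) (Fin p) ℝ)
    (A22 : Matrix (Fin r) (Fin r) ℝ) (K : Matrix (Fin r) (Fin p) ℝ) :
    Matrix (Fin r) (Fin p) ℝ :=
  K * A11 - K * A12 * K + A21 - A22 * K

/-- The `W` member of the SRTR pair obtained from `K`. -/
noncomputable def srtrW {p r : ℕ} (A11 : Matrix (Fin p) (Fin p) ℝ)
    (A12 : Matrix (Fin p) (Fin r) ℝ) (A21 : Matrix (Fin r) (Fin p) ℝ)
    (A22 : Matrix (Fin r) (Fin r) ℝ) (K : Matrix (Fin r) (Fin p) ℝ) :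
    Matrix (Fin p) (Fin p) FF :=
  mapF (A11 - A12 * K) +
    mapF A12 * (lamI (A22 + K * A12))⁻¹ * mapF (AKmat A11 A12 A21 A22 K)

/-- The `V` member of the SRTR pair obtained from `K`. -/
noncomputable def srtrV {p r m : ℕ} (A12 : Matrix (Fin p) (Fin r) ℝ)
    (A22 : Matrix (Fin r) (Fin r) ℝ) (B1 : Matrix (Fin p) (Fin m) ℝ)
    (B2 : Matrix (Fin r) (Fin m) ℝ) (K : Matrix (Fin r) (Fin p) ℝ) :
    Matrix (Fin p) (Fin m) FF :=
  mapF B1 + mapF A12 * (lamI (A22 + K * A12))⁻¹ * mapF (K * B1 + B2)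

/-- The plant transfer function `G = [I_p 0] (λ I_n - A)⁻¹ B`. -/
noncomputable def plantG {p r m : ℕ} (A11 : Matrix (Fin p) (Fin p) ℝ)
    (A12 : Matrix (Fin p) (Fin r) ℝ) (A21 : Matrix (Fin r) (Fin p) ℝ)
    (A22 : Matrix (Fin r) (Fin r) ℝ) (B1 : Matrix (Fin p) (Fin m) ℝ)
    (B2 : Matrix (Fin r) (Fin m) ℝ) : Matrix (Fin p) (Fin m) FF :=
  fromCols (1 : Matrix (Fin p) (Fin p) FF) (0 : Matrix (Fin p) (Fin r) FF) *
    (lamI (fromBlocks A11 A12 A21 A22))⁻¹ * mapF (fromRows B1 B2)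

/-- `(A12, A22)` is observable: `[A22 - μ I ; A12]` has full column rank for all `μ : ℂ`. -/
def ObsPair {p r : ℕ} (A12 : Matrix (Fin p) (Fin r) ℝ)
    (A22 : Matrix (Fin r) (Fin r) ℝ) : Prop :=
  ∀ μ : ℂ, (fromRows (mapC A22 - μ • (1 : Matrix (Fin r) (Fin r) ℂ)) (mapC A12)).rank = r

/-- `(A, B)` is controllable: `[A - μ I, B]` has full row rank for all `μ : ℂ`. -/
def CtrbPair {p r m : ℕ} (A : Matrix (Fin p ⊕ Fin r) (Fin p ⊕ Fin r) ℝ)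
    (B : Matrix (Fin p ⊕ Fin r) (Fin m) ℝ) : Prop :=
  ∀ μ : ℂ, (fromCols (mapC A - μ • (1 : Matrix (Fin p ⊕ Fin r) (Fin p ⊕ Fin r) ℂ))
    (mapC B)).rank = p + r

/-! Conjugating `λI - A` by the shear `T = [I 0; K I]` gives a block matrix `N` with lower-right
block `D = λI - (A₂₂ + K A₁₂)`, whose Schur complement with respect to `D` is exactly `λI - W`.
Hence `det D * det (λI - W) = det (λI - A) ≠ 0`. Moreover `T` does not touch the top block row,
so for `X = (λI - A)⁻¹ B` the top block of `T X` is `G`; eliminating the lower unknowns from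
`N (T X) = T B` gives `(λI - W) G = V`. -/

section BlockElimination

variable {α : Type*} {m n o : Type*} [Fintype m] [Fintype n]

theorem fromCols_one_zero_mul [DecidableEq m] [Semiring α] (X : Matrix (m ⊕ n) o α) :
    fromCols (1 : Matrix m m α) (0 : Matrix m n α) * X = X.toRows₁ := by
  rw [← fromRows_toRows X, fromCols_mul_fromRows, toRows₁_fromRows]
  simp

theorem toRows₁_fromBlocks_one_zero_mul [DecidableEq m] [DecidableEq n] [Semiring α]
    (K : Matrix n m α) (X : Matrix (m ⊕ n) o α) :
    ((fromBlocks 1 0 K 1 : Matrix (m ⊕ n) (m ⊕ n) α) * X).toRows₁ = X.toRows₁ := by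
  obtain ⟨X₁, X₂, rfl⟩ : ∃ X₁ X₂, X = fromRows X₁ X₂ := ⟨_, _, (fromRows_toRows X).symm⟩
  rw [fromBlocks_mul_fromRows, toRows₁_fromRows]
  simp

theorem schurComplement_mul_toRows₁ [DecidableEq n] [Ring α] {P : Matrix m m α}
    {Q : Matrix m n α} {R : Matrix n m α} {S : Matrix n n α} [Invertible S] {X : Matrix (m ⊕ n) o α}
    {Y₁ : Matrix m o α} {Y₂ : Matrix n o α} (h : fromBlocks P Q R S * X = fromRows Y₁ Y₂) :
    (P - Q * ⅟S * R) * X.toRows₁ = Y₁ - Q * ⅟S * Y₂ := by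
  rw [← fromRows_toRows X, fromBlocks_mul_fromRows] at h
  obtain ⟨h₁, h₂⟩ := fromRows_inj h
  rw [← h₁, ← h₂]
  simp only [Matrix.mul_add, Matrix.sub_mul, Matrix.mul_assoc, Matrix.invOf_mul_cancel_left]
  abel

theorem fromBlocks_one_zero_mul_smul_one_sub_fromBlocks [DecidableEq m] [DecidableEq n]
    [CommRing α] (c : α) (A₁₁ : Matrix m m α) (A₁₂ : Matrix m n α) (A₂₁ : Matrix n m α)
    (A₂₂ : Matrix n n α) (K : Matrix n m α) :
    fromBlocks 1 0 K 1 * (c • 1 - fromBlocks A₁₁ A₁₂ A₂₁ A₂₂) =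
      fromBlocks (c • 1 - (A₁₁ - A₁₂ * K)) (-A₁₂)
        (-(K * A₁₁ - K * A₁₂ * K + A₂₁ - A₂₂ * K)) (c • 1 - (A₂₂ + K * A₁₂)) *
        fromBlocks 1 0 K 1 := by
  rw [← fromBlocks_one, fromBlocks_smul, sub_eq_add_neg, fromBlocks_neg, fromBlocks_add,
    fromBlocks_multiply, fromBlocks_multiply]
  congr 1 <;> simp only [Matrix.sub_mul, Matrix.mul_add, Matrix.add_mul,
    Matrix.mul_smul, Matrix.smul_mul, Matrix.mul_one, Matrix.one_mul, Matrix.mul_zero,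
    Matrix.zero_mul, Matrix.neg_mul, Matrix.mul_neg, Matrix.mul_assoc, smul_zero] <;> abel

end BlockElimination

theorem det_lamI {k : Type} [Fintype k] [DecidableEq k] (M : Matrix k k ℝ) :
    (lamI M).det = algebraMap ℝ[X] FF M.charpoly := by
  have : lamI M = (algebraMap ℝ[X] FF).mapMatrix M.charmatrix := by
    ext i j
    by_cases h : i = j <;>
      simp [lamI, mapF, lam, h, RatFunc.algebraMap_X]
  rw [this, ← RingHom.map_det, charpoly]

theorem isUnit_lamI {k : Type} [Fintype k] [DecidableEq k] (M : Matrix k k ℝ) :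
    IsUnit (lamI M) := by
  rw [isUnit_iff_isUnit_det, det_lamI, isUnit_iff_ne_zero,
    map_ne_zero_iff _ (IsFractionRing.injective ℝ[X] FF)]
  exact M.charpoly_monic.ne_zero

theorem stmt_0_general (p r m : ℕ)
    (A11 : Matrix (Fin p) (Fin p) ℝ) (A12 : Matrix (Fin p) (Fin r) ℝ)
    (A21 : Matrix (Fin r) (Fin p) ℝ) (A22 : Matrix (Fin r) (Fin r) ℝ)
    (B1 : Matrix (Fin p) (Fin m) ℝ) (B2 : Matrix (Fin r) (Fin m) ℝ) :
    ∀ K : Matrix (Fin r) (Fin p) ℝ,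
      IsUnit (lam • (1 : Matrix (Fin p) (Fin p) FF) - srtrW A11 A12 A21 A22 K) ∧
      (lam • (1 : Matrix (Fin p) (Fin p) FF) - srtrW A11 A12 A21 A22 K) *
          plantG A11 A12 A21 A22 B1 B2 = srtrV A12 A22 B1 B2 K := by
  intro K
  set L := lamI (fromBlocks A11 A12 A21 A22)
  set D := lamI (A22 + K * A12)
  let : Invertible D := (isUnit_lamI _).invertible
  set T : Matrix (Fin p ⊕ Fin r) (Fin p ⊕ Fin r) FF := fromBlocks 1 0 (mapF K) 1
  set N := fromBlocks (lam • 1 - mapF (A11 - A12 * K)) (-mapF A12)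
    (-mapF (AKmat A11 A12 A21 A22 K)) D
  have hshear : T * L = N * T := by
    simpa [L, N, T, D, lamI, fromBlocks_map, AKmat, mapF, Matrix.map_mul, Matrix.map_sub,
      Matrix.map_add] using
      fromBlocks_one_zero_mul_smul_one_sub_fromBlocks lam (mapF A11) (mapF A12) (mapF A21)
        (mapF A22) (mapF K)
  have hschur :
      lam • 1 - mapF (A11 - A12 * K) - -mapF A12 * ⅟D * -mapF (AKmat A11 A12 A21 A22 K) =
        lam • 1 - srtrW A11 A12 A21 A22 K := by
    rw [srtrW, invOf_eq_nonsing_inv, Matrix.neg_mul, Matrix.neg_mul, Matrix.mul_neg, neg_neg,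
      sub_sub]
  rw [← hschur]
  constructor
  · have hdet : N.det = L.det := by
      have hT : T.det = 1 := by simp [T]
      simpa [hT] using congrArg det hshear.symm
    rw [← isUnit_fromBlocks_iff_of_invertible₂₂, isUnit_iff_isUnit_det, hdet,
      ← isUnit_iff_isUnit_det]
    exact isUnit_lamI _
  · have hX := schurComplement_mul_toRows₁ (X := T * (L⁻¹ * mapF (fromRows B1 B2)))
      (Y₁ := mapF B1) (Y₂ := mapF (K * B1 + B2)) (by
        rw [← Matrix.mul_assoc, ← hshear, Matrix.mul_assoc,
          Matrix.mul_nonsing_inv_cancel_left _ _ ((isUnit_iff_isUnit_det _).mp (isUnit_lamI _)),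
          mapF, fromRows_map, fromBlocks_mul_fromRows]
        simp [mapF, Matrix.map_mul, Matrix.map_add])
    rw [toRows₁_fromBlocks_one_zero_mul] at hX
    rw [plantG, Matrix.mul_assoc (fromCols _ _), fromCols_one_zero_mul, hX, srtrV,
      invOf_eq_nonsing_inv, Matrix.neg_mul, Matrix.neg_mul, sub_neg_eq_add]

/-- For every `K`, `λ I_p - W` is invertible over `FF` and
`(λ I_p - W) * G = V`, so the SRTR pair `(W, V)` is a left factorization of `G`. -/
theorem stmt_0 (p r m : ℕ) (hp : 0 < p) (hr : 0 < r) (hm : 0 < m)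
    (A11 : Matrix (Fin p) (Fin p) ℝ) (A12 : Matrix (Fin p) (Fin r) ℝ)
    (A21 : Matrix (Fin r) (Fin p) ℝ) (A22 : Matrix (Fin r) (Fin r) ℝ)
    (B1 : Matrix (Fin p) (Fin m) ℝ) (B2 : Matrix (Fin r) (Fin m) ℝ) :
    ∀ K : Matrix (Fin r) (Fin p) ℝ,
      IsUnit (lam • (1 : Matrix (Fin p) (Fin p) FF) - srtrW A11 A12 A21 A22 K) ∧
      (lam • (1 : Matrix (Fin p) (Fin p) FF) - srtrW A11 A12 A21 A22 K) *
          plantG A11 A12 A21 A22 B1 B2 = srtrV A12 A22 B1 B2 K :=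
  stmt_0_general p r m A11 A12 A21 A22 B1 B2
end
end

section
/- Let G1 := D̄1 + C̄·(λI_q − Ā)^{-1}·B̄1 ∈ F^{p×p} and G2 := D̄2 + C̄·(λI_q − Ā)^{-1}·B̄2 ∈ F^{p×m}. Then the matrix I_p − λ^{-1}·G1 is invertible over F and (I_p − λ^{-1}·G1)^{-1}·(λ^{-1}·G2) = [I_p 0]·(λI_{p+q} − Â)^{-1}·B̂, where Â := [[D̄1, C̄],[B̄1, Ā]] ∈ ℝ^{(p+q)×(p+q)} and B̂ := [D̄2; B̄2] ∈ ℝ^{(p+q)×m}. -/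
/-!
The pencil `λI - Â` has blocks `λI - D̄1`, `-C̄`, `-B̄1`, `λI - Ā`, and its Schur complement with
respect to the invertible block `λI - Ā` is `λI - G1 = λ (I - λ⁻¹ G1)`. Since `det (λI - Â)` is
nonzero, so is the determinant of this Schur complement, and the first block row of
`(λI - Â)⁻¹` is `(λI - G1)⁻¹ [I, C̄ (λI - Ā)⁻¹]`; multiplying it by `B̂` gives `(λI - G1)⁻¹ G2`.
-/

open Matrix Polynomial

set_option synthInstance.maxHeartbeats 1000000
set_option maxHeartbeats 1000000

noncomputable section

section BlockInverse

variable {R : Type*} [CommRing R] {l n o : Type*} [Fintype l] [Fintype n]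
  [DecidableEq l] [DecidableEq n]

lemma isUnit_det_sub_mul_inv_mul_of_fromBlocks (A : Matrix l l R) (B : Matrix l n R)
    (C : Matrix n l R) (D : Matrix n n R) (hD : IsUnit D.det)
    (h : IsUnit (fromBlocks A B C D).det) : IsUnit (A - B * D⁻¹ * C).det := by
  let := D.invertibleOfIsUnitDet hD
  rw [det_fromBlocks₂₂, invOf_eq_nonsing_inv] at h
  exact isUnit_of_mul_isUnit_right h

lemma fromCols_one_zero_mul_inv_fromBlocks_mul_fromRows (A : Matrix l l R)
    (B : Matrix l n R) (C : Matrix n l R) (D : Matrix n n R) (E : Matrix l o R)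
    (F : Matrix n o R) (hD : IsUnit D.det) (h : IsUnit (fromBlocks A B C D).det) :
    fromCols (1 : Matrix l l R) (0 : Matrix l n R) * (fromBlocks A B C D)⁻¹ * fromRows E F =
      (A - B * D⁻¹ * C)⁻¹ * (E - B * D⁻¹ * F) := by
  let := D.invertibleOfIsUnitDet hD
  let := (fromBlocks A B C D).invertibleOfIsUnitDet h
  let := invertibleOfFromBlocks₂₂Invertible A B C D
  rw [← invOf_eq_nonsing_inv (fromBlocks A B C D), invOf_fromBlocks₂₂_eq,
    fromCols_mul_fromBlocks, fromCols_mul_fromRows]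
  simp only [Matrix.one_mul, Matrix.zero_mul, add_zero, Matrix.neg_mul, ← sub_eq_add_neg,
    invOf_eq_nonsing_inv, Matrix.mul_sub, Matrix.mul_assoc]

end BlockInverse

lemma lamI_eq_charmatrix_map {k : Type} [Fintype k] [DecidableEq k] (M : Matrix k k ℝ) :
    lamI M = (charmatrix M).map (algebraMap ℝ[X] FF) := by
  have hX : (algebraMap ℝ[X] FF) X = lam := RatFunc.algebraMap_X
  ext i j
  by_cases h : i = j <;>
    simp [lamI, mapF, h, hX, smul_eq_mul]

lemma isUnit_det_lamI {k : Type} [Fintype k] [DecidableEq k] (M : Matrix k k ℝ) :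
    IsUnit (lamI M).det := by
  rw [lamI_eq_charmatrix_map, ← RingHom.mapMatrix_apply, ← RingHom.map_det]
  exact isUnit_iff_ne_zero.mpr (RatFunc.algebraMap_ne_zero (charpoly_monic M).ne_zero)

lemma mapF_fromRows {k l n : Type} (M : Matrix k n ℝ) (N : Matrix l n ℝ) :
    mapF (fromRows M N) = fromRows (mapF M) (mapF N) := by
  ext (i | i) j <;> rfl

lemma lamI_fromBlocks {k l : Type} [Fintype k] [Fintype l] [DecidableEq k] [DecidableEq l]
    (A : Matrix k k ℝ) (B : Matrix k l ℝ) (C : Matrix l k ℝ) (D : Matrix l l ℝ) :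
    lamI (fromBlocks A B C D) = fromBlocks (lamI A) (-mapF B) (-mapF C) (lamI D) := by
  ext (i | i) (j | j) <;> simp [lamI, mapF, one_apply]

lemma lamI_sub_eq_smul {k : Type} [Fintype k] [DecidableEq k] (M : Matrix k k ℝ)
    (N : Matrix k k FF) : lamI M - N = lam • (1 - lam⁻¹ • (mapF M + N)) := by
  rw [smul_sub, smul_smul, mul_inv_cancel₀ RatFunc.X_ne_zero, one_smul, lamI]
  abel

theorem stmt_2_general (p m q : ℕ)
    (Abar : Matrix (Fin q) (Fin q) ℝ) (Bbar1 : Matrix (Fin q) (Fin p) ℝ)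
    (Bbar2 : Matrix (Fin q) (Fin m) ℝ) (Cbar : Matrix (Fin p) (Fin q) ℝ)
    (Dbar1 : Matrix (Fin p) (Fin p) ℝ) (Dbar2 : Matrix (Fin p) (Fin m) ℝ) :
    let G1 : Matrix (Fin p) (Fin p) FF :=
      mapF Dbar1 + mapF Cbar * (lamI Abar)⁻¹ * mapF Bbar1
    let G2 : Matrix (Fin p) (Fin m) FF :=
      mapF Dbar2 + mapF Cbar * (lamI Abar)⁻¹ * mapF Bbar2
    IsUnit ((1 : Matrix (Fin p) (Fin p) FF) - lam⁻¹ • G1) ∧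
    ((1 : Matrix (Fin p) (Fin p) FF) - lam⁻¹ • G1)⁻¹ * (lam⁻¹ • G2) =
      fromCols (1 : Matrix (Fin p) (Fin p) FF) (0 : Matrix (Fin p) (Fin q) FF) *
        (lamI (fromBlocks Dbar1 Cbar Bbar1 Abar))⁻¹ * mapF (fromRows Dbar2 Bbar2) := by
  intro G1 G2
  let : Invertible lam := invertibleOfNonzero RatFunc.X_ne_zero
  have hschur : lamI Dbar1 - -mapF Cbar * (lamI Abar)⁻¹ * -mapF Bbar1 =
      lam • (1 - lam⁻¹ • G1) := by
    simpa only [Matrix.neg_mul, Matrix.mul_neg, neg_neg] using lamI_sub_eq_smul Dbar1 _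
  have hblock := isUnit_det_lamI (fromBlocks Dbar1 Cbar Bbar1 Abar)
  rw [lamI_fromBlocks] at hblock
  have hschur_det :=
    isUnit_det_sub_mul_inv_mul_of_fromBlocks _ _ _ _ (isUnit_det_lamI Abar) hblock
  rw [hschur, det_smul] at hschur_det
  have hdet : IsUnit (1 - lam⁻¹ • G1).det := isUnit_of_mul_isUnit_right hschur_det
  refine ⟨(isUnit_iff_isUnit_det _).mpr hdet, ?_⟩
  rw [lamI_fromBlocks, mapF_fromRows, fromCols_one_zero_mul_inv_fromBlocks_mul_fromRows _ _ _ _ _ _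
    (isUnit_det_lamI Abar) hblock, hschur, Matrix.inv_smul (A := 1 - lam⁻¹ • G1) lam hdet,
    invOf_eq_inv]
  simp only [G2, Matrix.smul_mul, Matrix.mul_smul, Matrix.neg_mul, sub_neg_eq_add]

/-- `I_p - λ⁻¹ G1` is invertible and
`(I_p - λ⁻¹ G1)⁻¹ (λ⁻¹ G2) = [I_p 0] (λ I - Â)⁻¹ B̂` with
`Â = [[D̄1, C̄],[B̄1, Ā]]`, `B̂ = [D̄2; B̄2]`. -/
theorem stmt_2 (p m q : ℕ) (hp : 0 < p) (hm : 0 < m) (hq : 0 < q)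
    (Abar : Matrix (Fin q) (Fin q) ℝ) (Bbar1 : Matrix (Fin q) (Fin p) ℝ)
    (Bbar2 : Matrix (Fin q) (Fin m) ℝ) (Cbar : Matrix (Fin p) (Fin q) ℝ)
    (Dbar1 : Matrix (Fin p) (Fin p) ℝ) (Dbar2 : Matrix (Fin p) (Fin m) ℝ) :
    let G1 : Matrix (Fin p) (Fin p) FF :=
      mapF Dbar1 + mapF Cbar * (lamI Abar)⁻¹ * mapF Bbar1
    let G2 : Matrix (Fin p) (Fin m) FF :=
      mapF Dbar2 + mapF Cbar * (lamI Abar)⁻¹ * mapF Bbar2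
    IsUnit ((1 : Matrix (Fin p) (Fin p) FF) - lam⁻¹ • G1) ∧
    ((1 : Matrix (Fin p) (Fin p) FF) - lam⁻¹ • G1)⁻¹ * (lam⁻¹ • G2) =
      fromCols (1 : Matrix (Fin p) (Fin p) FF) (0 : Matrix (Fin p) (Fin q) FF) *
        (lamI (fromBlocks Dbar1 Cbar Bbar1 Abar))⁻¹ * mapF (fromRows Dbar2 Bbar2) :=
  stmt_2_general p m q Abar Bbar1 Bbar2 Cbar Dbar1 Dbar2
end
end

section
/- Assume (A12, A22) is observable and (A, B) is controllable. Then for every K ∈ ℝ^{(n−p)×p}: (i) for every μ ∈ ℂ the complexified stacked matrix [(A22 + K·A12) − μI_{n−p}; A12] has rank n−p, and (ii) for every μ ∈ ℂ the complexified matrix [(A22 + K·A12) − μI_{n−p}, A_K, K·B1 + B2] has rank n−p; that is, the order-(n−p) state-space realization ((A22+K·A12), [A_K, K·B1+B2], A12, [A11−A12·K, B1]) of the SRTR pair (W, V) is observable and controllable, hence minimal. -/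
/-!
The shear `T = [[I, 0], [K, I]]` is the change of state coordinates `x₂ ↦ K x₁ + x₂`: it turns
`A` into `T A T⁻¹ = [[A11 - A12 K, A12], [A_K, A22 + K A12]]` and `B` into `T B = [B1; K B1 + B2]`.
Observability: `[A22 + K A12 - μ; A12]` is obtained from `[A22 - μ; A12]` by the invertible row
operation "add `K` times the bottom block to the top one". Controllability: the rank of
`[A - μ, B]` is invariant under similarity, so `[T A T⁻¹ - μ, T B]` has full row rank; hence its
last `n - p` rows are linearly independent, and up to a permutation of columns they form
`[A22 + K A12 - μ, A_K, K B1 + B2]`.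
-/

open Matrix Polynomial

set_option synthInstance.maxHeartbeats 1000000
set_option maxHeartbeats 1000000

noncomputable section

namespace Matrix

theorem submatrix_inr_fromCols_fromBlocks_sub_smul {R l m o : Type*} [Ring R] [DecidableEq l]
    [DecidableEq m] (A : Matrix l l R) (B : Matrix l m R) (C : Matrix m l R) (D : Matrix m m R)
    (E : Matrix l o R) (F : Matrix m o R) (μ : R) :
    (fromCols (fromBlocks A B C D - μ • 1) (fromRows E F)).submatrix Sum.inr
        ((Equiv.sumComm m l).sumCongr (Equiv.refl o)) =
      fromCols (fromCols (D - μ • 1) C) F := by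
  ext i ((j | j) | j) <;> simp [one_apply]

variable {R : Type*} {l m n : Type*} [Fintype l] [Fintype m] [Fintype n]

theorem linearIndependent_row_iff_rank_eq_card [Field R] (M : Matrix m n R) :
    LinearIndependent R M.row ↔ M.rank = Fintype.card m := by
  rw [rank_eq_finrank_span_row, linearIndependent_iff_card_eq_finrank_span, Set.finrank, eq_comm]

theorem rank_submatrix_eq_card_of_rank_eq_card [Field R] {o : Type*} [Fintype o]
    {M : Matrix m n R} (hM : M.rank = Fintype.card m) {f : l → m} (hf : Function.Injective f)
    (e : o ≃ n) : (M.submatrix f e).rank = Fintype.card l :=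
  (rank_submatrix (M.submatrix f id) (Equiv.refl l) e).trans <|
    (linearIndependent_row_iff_rank_eq_card _).1
      (((linearIndependent_row_iff_rank_eq_card M).2 hM).comp f hf)

variable [CommRing R] [DecidableEq m] [DecidableEq n]

theorem rank_fromRows_add_mul (D : Matrix n l R) (C : Matrix m l R) (L : Matrix n m R) :
    (fromRows (D + L * C) C).rank = (fromRows D C).rank := by
  have hshear : fromRows (D + L * C) C =
      (fromBlocks 1 L 0 1 : Matrix (n ⊕ m) (n ⊕ m) R) * fromRows D C := by
    simp [fromBlocks_mul_fromRows]
  rw [hshear, rank_mul_eq_right_of_isUnit_det]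
  simp

theorem rank_fromCols_conj_sub_smul (A T T' : Matrix n n R) (B : Matrix n m R) (μ : R)
    (hT : T * T' = 1) :
    (fromCols (T * A * T' - μ • 1) (T * B)).rank = (fromCols (A - μ • 1) B).rank := by
  have hconj : fromCols (T * A * T' - μ • 1) (T * B) =
      T * fromCols (A - μ • 1) B * (fromBlocks T' 0 0 1 : Matrix (n ⊕ m) (n ⊕ m) R) := by
    rw [mul_fromCols, fromCols_mul_fromBlocks]
    simp [Matrix.mul_sub, Matrix.sub_mul, Matrix.mul_assoc, hT]
  rw [hconj, rank_mul_eq_left_of_isUnit_det, rank_mul_eq_right_of_isUnit_det]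
  · exact isUnit_det_of_right_inverse hT
  · simpa [det_fromBlocks_zero₁₂] using isUnit_det_of_left_inverse hT

end Matrix

lemma mapC_mul {k l o : Type} [Fintype l] (M : Matrix k l ℝ) (N : Matrix l o ℝ) :
    mapC (M * N) = mapC M * mapC N :=
  Matrix.map_mul

lemma mapC_add {k l : Type} (M N : Matrix k l ℝ) : mapC (M + N) = mapC M + mapC N :=
  Matrix.map_add _ (map_add _) M N

lemma mapC_fromBlocks {k l o q : Type} (A : Matrix k l ℝ) (B : Matrix k o ℝ) (C : Matrix q l ℝ)
    (D : Matrix q o ℝ) :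
    mapC (fromBlocks A B C D) = fromBlocks (mapC A) (mapC B) (mapC C) (mapC D) :=
  fromBlocks_map ..

lemma mapC_fromRows {k l o : Type} (A : Matrix k o ℝ) (B : Matrix l o ℝ) :
    mapC (fromRows A B) = fromRows (mapC A) (mapC B) :=
  fromRows_map ..

lemma mapC_one {k : Type} [DecidableEq k] : mapC (1 : Matrix k k ℝ) = 1 :=
  Matrix.map_one _ (map_zero _) (map_one _)

section Shear

variable {p r m : ℕ} (K : Matrix (Fin r) (Fin p) ℝ)

lemma shear_mul_shear_neg :
    (fromBlocks 1 0 K 1 : Matrix (Fin p ⊕ Fin r) (Fin p ⊕ Fin r) ℝ) *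
      fromBlocks 1 0 (-K) 1 = 1 := by
  simp [fromBlocks_multiply]

lemma shear_mul_fromBlocks_mul_shear_neg (A11 : Matrix (Fin p) (Fin p) ℝ)
    (A12 : Matrix (Fin p) (Fin r) ℝ) (A21 : Matrix (Fin r) (Fin p) ℝ)
    (A22 : Matrix (Fin r) (Fin r) ℝ) :
    fromBlocks 1 0 K 1 * fromBlocks A11 A12 A21 A22 * fromBlocks 1 0 (-K) 1 =
      fromBlocks (A11 - A12 * K) A12 (AKmat A11 A12 A21 A22 K) (A22 + K * A12) := by
  simp only [fromBlocks_multiply, AKmat, Matrix.one_mul, Matrix.mul_one, Matrix.zero_mul,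
    Matrix.mul_zero, Matrix.mul_neg, Matrix.add_mul, add_zero, zero_add]
  congr 1 <;> abel

lemma shear_mul_fromRows (B1 : Matrix (Fin p) (Fin m) ℝ) (B2 : Matrix (Fin r) (Fin m) ℝ) :
    (fromBlocks 1 0 K 1 : Matrix (Fin p ⊕ Fin r) (Fin p ⊕ Fin r) ℝ) * fromRows B1 B2 =
      fromRows B1 (K * B1 + B2) := by
  simp [fromBlocks_mul_fromRows]

end Shear

theorem stmt_4_general (p r m : ℕ)
    (A11 : Matrix (Fin p) (Fin p) ℝ) (A12 : Matrix (Fin p) (Fin r) ℝ)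
    (A21 : Matrix (Fin r) (Fin p) ℝ) (A22 : Matrix (Fin r) (Fin r) ℝ)
    (B1 : Matrix (Fin p) (Fin m) ℝ) (B2 : Matrix (Fin r) (Fin m) ℝ)
    (hobs : ObsPair A12 A22)
    (hctrb : CtrbPair (fromBlocks A11 A12 A21 A22) (fromRows B1 B2)) :
    ∀ K : Matrix (Fin r) (Fin p) ℝ,
      (∀ μ : ℂ, (fromRows (mapC (A22 + K * A12) - μ • (1 : Matrix (Fin r) (Fin r) ℂ))
          (mapC A12)).rank = r) ∧
      (∀ μ : ℂ, (fromCols (fromCols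
          (mapC (A22 + K * A12) - μ • (1 : Matrix (Fin r) (Fin r) ℂ))
          (mapC (AKmat A11 A12 A21 A22 K))) (mapC (K * B1 + B2))).rank = r) := by
  intro K
  refine ⟨fun μ => ?_, fun μ => ?_⟩
  · rw [mapC_add, mapC_mul, add_sub_right_comm, rank_fromRows_add_mul, hobs μ]
  · have hfull : (fromCols (mapC (fromBlocks (A11 - A12 * K) A12 (AKmat A11 A12 A21 A22 K)
        (A22 + K * A12)) - μ • 1) (mapC (fromRows B1 (K * B1 + B2)))).rank =
          Fintype.card (Fin p ⊕ Fin r) := by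
      rw [← shear_mul_fromBlocks_mul_shear_neg, ← shear_mul_fromRows, mapC_mul, mapC_mul,
        mapC_mul, rank_fromCols_conj_sub_smul _ _ _ _ _
          (by rw [← mapC_mul, shear_mul_shear_neg, mapC_one])]
      simpa using hctrb μ
    rw [← submatrix_inr_fromCols_fromBlocks_sub_smul (mapC (A11 - A12 * K)) (mapC A12) _ _
      (mapC B1), ← mapC_fromBlocks, ← mapC_fromRows,
      rank_submatrix_eq_card_of_rank_eq_card hfull Sum.inr_injective, Fintype.card_fin]

/-- under observability and controllability, for every `K` the order-`(n-p)`
realization of the SRTR pair is observable and controllable, hence minimal. -/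
theorem stmt_4 (p r m : ℕ) (hp : 0 < p) (hr : 0 < r) (hm : 0 < m)
    (A11 : Matrix (Fin p) (Fin p) ℝ) (A12 : Matrix (Fin p) (Fin r) ℝ)
    (A21 : Matrix (Fin r) (Fin p) ℝ) (A22 : Matrix (Fin r) (Fin r) ℝ)
    (B1 : Matrix (Fin p) (Fin m) ℝ) (B2 : Matrix (Fin r) (Fin m) ℝ)
    (hobs : ObsPair A12 A22)
    (hctrb : CtrbPair (fromBlocks A11 A12 A21 A22) (fromRows B1 B2)) :
    ∀ K : Matrix (Fin r) (Fin p) ℝ,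
      (∀ μ : ℂ, (fromRows (mapC (A22 + K * A12) - μ • (1 : Matrix (Fin r) (Fin r) ℂ))
          (mapC A12)).rank = r) ∧
      (∀ μ : ℂ, (fromCols (fromCols
          (mapC (A22 + K * A12) - μ • (1 : Matrix (Fin r) (Fin r) ℂ))
          (mapC (AKmat A11 A12 A21 A22 K))) (mapC (K * B1 + B2))).rank = r) :=
  stmt_4_general p r m A11 A12 A21 A22 B1 B2 hobs hctrb
end
end

section
/- Let F1 ∈ ℝ^{p×p}, F2 ∈ ℝ^{(n−p)×p}, let U ∈ ℝ^{p×p} be invertible, and let K ∈ ℝ^{(n−p)×p} satisfy the non-symmetric algebraic Riccati equation K·(A11 + F1) − K·A12·K + (A21 + F2) − A22·K = 0; set A_x := A11 + F1 − A12·K. Then the two state-space realizations define the same transfer function matrix over F: [U, 0]·(λI_n − [[A11 + F1, A12],[A21 + F2, A22]])^{-1}·[[F1, B1],[F2, B2]] + [U, 0] = [U, 0]·(λI_n − [[A_x, A12],[0, A22 + K·A12]])^{-1}·[[A_x − A11 + A12·K, B1],[K·A12·K + A22·K − K·A11 − A21, K·B1 + B2]] + [U, 0] (equality of p×(p+m)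 matrices over F). -/
open Matrix Polynomial

set_option synthInstance.maxHeartbeats 1000000
set_option maxHeartbeats 1000000

noncomputable section

/-!
The second realization is the first one after the state-space change of coordinates
`T = [[I, 0], [K, I]]`, `T⁻¹ = [[I, 0], [-K, I]]`. Conjugating the state matrix by `T` produces
the lower-left block `K (A11 + F1) - K A12 K + (A21 + F2) - A22 K`, which the Riccati equation
kills; the input matrix becomes `T [[F1, B1], [F2, B2]]`, and the output matrix `[U, 0]` is
unchanged by `T`. A transfer function `C (λI - A)⁻¹ B` is invariant under
`(C, A, B) ↦ (C T⁻¹, T A T⁻¹, T B)`; since `Matrix.inv` is the adjugate divided by the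
determinant, this holds without invertibility of `λI - A`.
-/

lemma mapF_mul {k l o : Type} [Fintype k] (M : Matrix l k ℝ) (N : Matrix k o ℝ) :
    mapF (M * N) = mapF M * mapF N :=
  Matrix.map_mul

lemma mapF_one {k : Type} [DecidableEq k] : mapF (1 : Matrix k k ℝ) = 1 :=
  Matrix.map_one _ (map_zero _) (map_one _)

section Similarity

variable {k : Type} [Fintype k] [DecidableEq k]

lemma lamI_conj {P Q : Matrix k k ℝ} (hPQ : P * Q = 1) (M : Matrix k k ℝ) :
    lamI (P * M * Q) = mapF P * lamI M * mapF Q := by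
  rw [lamI, lamI, Matrix.mul_sub, Matrix.sub_mul, mul_smul_comm, smul_mul_assoc, mul_one,
    ← mapF_mul, hPQ, mapF_one, mapF_mul, mapF_mul]

lemma inv_lamI_conj {P Q : Matrix k k ℝ} (hPQ : P * Q = 1) (M : Matrix k k ℝ) :
    (lamI (P * M * Q))⁻¹ = mapF P * (lamI M)⁻¹ * mapF Q := by
  have hPQF : mapF P * mapF Q = 1 := by rw [← mapF_mul, hPQ, mapF_one]
  rw [lamI_conj hPQ, Matrix.mul_inv_rev, Matrix.mul_inv_rev,
    Matrix.inv_eq_left_inv hPQF, Matrix.inv_eq_right_inv hPQF, Matrix.mul_assoc]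

lemma transfer_conj {l o : Type} {P Q : Matrix k k ℝ} (hPQ : P * Q = 1)
    (C : Matrix l k FF) (M : Matrix k k ℝ) (B : Matrix k o ℝ) :
    C * (lamI (P * M * Q))⁻¹ * mapF (P * B) = C * mapF P * (lamI M)⁻¹ * mapF B := by
  have hQP : Q * P = 1 := mul_eq_one_comm.mp hPQ
  calc C * (lamI (P * M * Q))⁻¹ * mapF (P * B)
      = C * mapF P * (lamI M)⁻¹ * (mapF Q * mapF P) * mapF B := by
        rw [inv_lamI_conj hPQ, mapF_mul P B]
        simp only [Matrix.mul_assoc]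
    _ = C * mapF P * (lamI M)⁻¹ * mapF B := by rw [← mapF_mul, hQP, mapF_one, Matrix.mul_one]

end Similarity

section BlockShear

variable {R : Type*} [Ring R] {m n : Type*} [Fintype m] [Fintype n] [DecidableEq m]
  [DecidableEq n]

def blockShear (K : Matrix n m R) : Matrix (m ⊕ n) (m ⊕ n) R :=
  fromBlocks 1 0 K 1

lemma blockShear_mul_blockShear_neg (K : Matrix n m R) :
    blockShear K * blockShear (-K) = 1 := by
  simp [blockShear, fromBlocks_multiply, ← fromBlocks_one]

lemma blockShear_mul_fromBlocks {o l : Type*} [Fintype o] (K : Matrix n m R)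
    (A : Matrix m o R) (B : Matrix m l R) (C : Matrix n o R) (D : Matrix n l R) :
    blockShear K * fromBlocks A B C D = fromBlocks A B (K * A + C) (K * B + D) := by
  rw [blockShear, fromBlocks_multiply]
  simp only [Matrix.one_mul, Matrix.zero_mul, add_zero]

lemma blockShear_conj (K : Matrix n m R) (A : Matrix m m R) (B : Matrix m n R)
    (C : Matrix n m R) (D : Matrix n n R) :
    blockShear K * fromBlocks A B C D * blockShear (-K) =
      fromBlocks (A - B * K) B (K * A - K * B * K + C - D * K) (D + K * B) := by
  rw [blockShear_mul_fromBlocks, blockShear, fromBlocks_multiply, fromBlocks_inj]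
  refine ⟨by simp [sub_eq_add_neg], by simp, ?_, by simp [add_comm]⟩
  simp only [Matrix.mul_one, Matrix.mul_neg, Matrix.add_mul, Matrix.mul_assoc]
  abel

lemma fromCols_zero_mul_blockShear {l : Type*} (X : Matrix l m R) (K : Matrix n m R) :
    fromCols X (0 : Matrix l n R) * blockShear K = fromCols X 0 := by
  simp [blockShear, fromCols_mul_fromBlocks]

lemma mapF_blockShear {ι κ : Type} [DecidableEq ι] [DecidableEq κ] (K : Matrix κ ι ℝ) :
    mapF (blockShear K) = blockShear (mapF K) := by
  simp only [blockShear, mapF, fromBlocks_map, Matrix.map_zero _ (map_zero _),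
    Matrix.map_one _ (map_zero _) (map_one _)]

end BlockShear

theorem stmt_10_general (p r m : ℕ)
    (A11 : Matrix (Fin p) (Fin p) ℝ) (A12 : Matrix (Fin p) (Fin r) ℝ)
    (A21 : Matrix (Fin r) (Fin p) ℝ) (A22 : Matrix (Fin r) (Fin r) ℝ)
    (B1 : Matrix (Fin p) (Fin m) ℝ) (B2 : Matrix (Fin r) (Fin m) ℝ)
    (F1 : Matrix (Fin p) (Fin p) ℝ) (F2 : Matrix (Fin r) (Fin p) ℝ)
    (U : Matrix (Fin p) (Fin p) ℝ)
    (K : Matrix (Fin r) (Fin p) ℝ)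
    (hric : K * (A11 + F1) - K * A12 * K + (A21 + F2) - A22 * K = 0) :
    let Ax : Matrix (Fin p) (Fin p) ℝ := A11 + F1 - A12 * K
    fromCols (mapF U) (0 : Matrix (Fin p) (Fin r) FF) *
        (lamI (fromBlocks (A11 + F1) A12 (A21 + F2) A22))⁻¹ *
        mapF (fromBlocks F1 B1 F2 B2) +
      fromCols (mapF U) (0 : Matrix (Fin p) (Fin m) FF) =
    fromCols (mapF U) (0 : Matrix (Fin p) (Fin r) FF) *
        (lamI (fromBlocks Ax A12 0 (A22 + K * A12)))⁻¹ *
        mapF (fromBlocks (Ax - A11 + A12 * K) B1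
          (K * A12 * K + A22 * K - K * A11 - A21) (K * B1 + B2)) +
      fromCols (mapF U) (0 : Matrix (Fin p) (Fin m) FF) := by
  intro Ax
  have hstate : fromBlocks Ax A12 0 (A22 + K * A12) =
      blockShear K * fromBlocks (A11 + F1) A12 (A21 + F2) A22 * blockShear (-K) := by
    rw [blockShear_conj, hric]
  have hinput : fromBlocks (Ax - A11 + A12 * K) B1
      (K * A12 * K + A22 * K - K * A11 - A21) (K * B1 + B2) =
      blockShear K * fromBlocks F1 B1 F2 B2 := by
    rw [blockShear_mul_fromBlocks, fromBlocks_inj]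
    refine ⟨by simp only [Ax]; abel, rfl, ?_, rfl⟩
    rw [eq_comm, ← sub_eq_zero, ← hric, Matrix.mul_add]
    abel
  rw [hstate, hinput, transfer_conj (blockShear_mul_blockShear_neg K), mapF_blockShear,
    fromCols_zero_mul_blockShear]

/-- if `K` solves the non-symmetric algebraic Riccati equation, the two
state-space realizations of the left factorization `[M N]` define the same transfer
function matrix over `FF`. -/
theorem stmt_10 (p r m : ℕ) (hp : 0 < p) (hr : 0 < r) (hm : 0 < m)
    (A11 : Matrix (Fin p) (Fin p) ℝ) (A12 : Matrix (Fin p) (Fin r) ℝ)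
    (A21 : Matrix (Fin r) (Fin p) ℝ) (A22 : Matrix (Fin r) (Fin r) ℝ)
    (B1 : Matrix (Fin p) (Fin m) ℝ) (B2 : Matrix (Fin r) (Fin m) ℝ)
    (F1 : Matrix (Fin p) (Fin p) ℝ) (F2 : Matrix (Fin r) (Fin p) ℝ)
    (U : Matrix (Fin p) (Fin p) ℝ) (hU : IsUnit U)
    (K : Matrix (Fin r) (Fin p) ℝ)
    (hric : K * (A11 + F1) - K * A12 * K + (A21 + F2) - A22 * K = 0) :
    let Ax : Matrix (Fin p) (Fin p) ℝ := A11 + F1 - A12 * K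
    fromCols (mapF U) (0 : Matrix (Fin p) (Fin r) FF) *
        (lamI (fromBlocks (A11 + F1) A12 (A21 + F2) A22))⁻¹ *
        mapF (fromBlocks F1 B1 F2 B2) +
      fromCols (mapF U) (0 : Matrix (Fin p) (Fin m) FF) =
    fromCols (mapF U) (0 : Matrix (Fin p) (Fin r) FF) *
        (lamI (fromBlocks Ax A12 0 (A22 + K * A12)))⁻¹ *
        mapF (fromBlocks (Ax - A11 + A12 * K) B1
          (K * A12 * K + A22 * K - K * A11 - A21) (K * B1 + B2)) +
      fromCols (mapF U) (0 : Matrix (Fin p) (Fin m) FF) :=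
  stmt_10_general p r m A11 A12 A21 A22 B1 B2 F1 F2 U K hric
end
end
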